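/- The basis functions L̃_k are orthonormal for the H¹₀ inner product: for all i, j ≥ 1, ∫_{-1}^{1} L̃_i'(x)·L̃_j'(x) dx = 1 if i = j and 0 otherwise. -/

import Mathlib

open Polynomial

/-- The Legendre polynomials, defined by the three-term recurrence
`L₀ = 1`, `L₁ = X`, `(k+2)·L_{k+2} = (2k+3)·X·L_{k+1} − (k+1)·L_k`. -/
noncomputable def legendre : ℕ → Polynomial ℝ
  | 0 => 1
  | 1 => Polynomial.X
  | (k + 2) =>
      Polynomial.C ((2 * (k : ℝ) + 3) / ((k : ℝ) + 2)) * (Polynomial.X * legendre (k + 1))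
        - Polynomial.C (((k : ℝ) + 1) / ((k : ℝ) + 2)) * legendre k

/-- The basis functions `L̃_k = (L_{k−1} − L_{k+1})/√(4k+2)`, for `k ≥ 1`. -/
noncomputable def legendreTilde (k : ℕ) : Polynomial ℝ :=
  Polynomial.C (1 / Real.sqrt (4 * (k : ℝ) + 2)) * (legendre (k - 1) - legendre (k + 1))

/-!
Differentiating the three-term recurrence gives `L_{k+1}' - L_{k-1}' = (2k+1) L_k`, so
`L̃_k' = -(2k+1)/√(4k+2) · L_k` and the claim reduces to `∫₋₁¹ L_i L_j = 2/(2i+1) · δ_ij`.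
Orthogonality follows from the Legendre equation `((1 - x²) L_n')' = -n(n+1) L_n`: integrating it
against `L_m` by parts yields an expression symmetric in `n, m`, while `n(n+1) ≠ m(m+1)`.
The norms follow from the recurrence and orthogonality, which give
`(2n+3) ∫ L_{n+1}² = (2n+1) ∫ L_n²`.
-/

noncomputable def polyIntegral (a b : ℝ) : ℝ[X] →ₗ[ℝ] ℝ where
  toFun p := ∫ x in a..b, p.eval x
  map_add' p q := by
    simp only [eval_add]
    exact intervalIntegral.integral_add (p.continuous.intervalIntegrable a b)
      (q.continuous.intervalIntegrable a b)
  map_smul' c p := by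
    simp only [eval_smul, smul_eq_mul, RingHom.id_apply]
    exact intervalIntegral.integral_const_mul c _

lemma polyIntegral_apply (a b : ℝ) (p : ℝ[X]) : polyIntegral a b p = ∫ x in a..b, p.eval x :=
  rfl

lemma polyIntegral_C_mul (a b c : ℝ) (p : ℝ[X]) :
    polyIntegral a b (C c * p) = c * polyIntegral a b p := by
  rw [C_mul', map_smul, smul_eq_mul]

lemma polyIntegral_derivative (a b : ℝ) (p : ℝ[X]) :
    polyIntegral a b (derivative p) = p.eval b - p.eval a :=
  intervalIntegral.integral_eq_sub_of_hasDerivAt (fun x _ => p.hasDerivAt x)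
    (p.derivative.continuous.intervalIntegrable a b)

lemma polyIntegral_derivative_mul (a b : ℝ) (p q : ℝ[X]) :
    polyIntegral a b (derivative p * q) =
      p.eval b * q.eval b - p.eval a * q.eval a - polyIntegral a b (p * derivative q) := by
  rw [eq_sub_iff_add_eq, ← map_add, ← derivative_mul, polyIntegral_derivative, eval_mul,
    eval_mul]

lemma legendre_recurrence (n : ℕ) :
    ((n : ℝ[X]) + 1) * legendre (n + 1) =
      (2 * (n : ℝ[X]) + 1) * X * legendre n - (n : ℝ[X]) * legendre (n - 1) := by
  cases n with
  | zero => simp [legendre]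
  | succ n =>
    have hn : (n : ℝ) + 2 ≠ 0 := by positivity
    have hC : ∀ r : ℝ, C ((n : ℝ) + 2) * C (r / ((n : ℝ) + 2)) = C r := fun r => by
      rw [← C_mul, mul_div_cancel₀ _ hn]
    have hcast : ((n + 1 : ℕ) : ℝ[X]) + 1 = C ((n : ℝ) + 2) := by
      simp only [Nat.cast_add, Nat.cast_one, map_add, map_natCast, map_ofNat]
      ring
    rw [hcast, legendre, mul_sub, Nat.add_sub_cancel]
    simp only [← mul_assoc, hC]
    simp only [map_add, map_mul, map_natCast, map_ofNat, map_one, Nat.cast_add, Nat.cast_one]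
    ring

lemma legendre_derivative_relations (n : ℕ) :
    X * derivative (legendre (n + 1)) - derivative (legendre n) =
        ((n : ℝ[X]) + 1) * legendre (n + 1) ∧
      derivative (legendre (n + 1)) - X * derivative (legendre n) =
        ((n : ℝ[X]) + 1) * legendre n := by
  induction n with
  | zero => simp [legendre]
  | succ n ih =>
    obtain ⟨hA, hC⟩ := ih
    have hrec₀ := legendre_recurrence (n + 1)
    have hrec := congrArg derivative hrec₀
    simp only [Nat.add_sub_cancel, derivative_mul, derivative_add, derivative_sub,
      derivative_natCast, derivative_one, derivative_X, derivative_ofNat, Nat.cast_add,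
      Nat.cast_one] at hrec₀ hrec
    have hC' : derivative (legendre (n + 2)) - X * derivative (legendre (n + 1)) =
        ((n : ℝ[X]) + 2) * legendre (n + 1) := by
      have hn : ((n : ℝ[X]) + 2) ≠ 0 := by exact_mod_cast (n + 1).succ_ne_zero
      refine mul_left_cancel₀ hn ?_
      linear_combination hrec + (n + 1) * hA
    push_cast
    constructor
    · linear_combination X * hC' + X * hA - hC - hrec₀
    · linear_combination hC'

lemma derivative_legendre_add_two_sub (n : ℕ) :
    derivative (legendre (n + 2)) - derivative (legendre n) =
      C (2 * (n : ℝ) + 3) * legendre (n + 1) := by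
  have hA := (legendre_derivative_relations n).1
  have hC := (legendre_derivative_relations (n + 1)).2
  simp only [map_add, map_mul, map_natCast, map_ofNat]
  push_cast at hC
  linear_combination hA + hC

lemma legendre_differential_equation (n : ℕ) :
    derivative ((1 - X ^ 2) * derivative (legendre n)) = -C ((n : ℝ) * (n + 1)) * legendre n := by
  cases n with
  | zero => simp [legendre]
  | succ n =>
    obtain ⟨hA, hC⟩ := legendre_derivative_relations n
    have hweighted : (1 - X ^ 2) * derivative (legendre (n + 1)) =
        ((n : ℝ[X]) + 1) * (legendre n - X * legendre (n + 1)) := by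
      linear_combination hC - X * hA
    rw [hweighted]
    simp only [derivative_mul, derivative_sub, derivative_natCast, derivative_one,
      derivative_X, map_mul, map_add, map_natCast, map_one, Nat.cast_add, Nat.cast_one]
    linear_combination (-((n : ℝ[X]) + 1)) * hA

lemma polyIntegral_one_sub_sq_mul_derivative_legendre (n m : ℕ) :
    polyIntegral (-1) 1 ((1 - X ^ 2) * derivative (legendre n) * derivative (legendre m)) =
      (n : ℝ) * (n + 1) * polyIntegral (-1) 1 (legendre n * legendre m) := by
  have h := polyIntegral_derivative_mul (-1) 1 ((1 - X ^ 2) * derivative (legendre n)) (legendre m)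
  rw [legendre_differential_equation, neg_mul, neg_mul, map_neg, mul_assoc (C _),
    polyIntegral_C_mul] at h
  norm_num at h
  linarith

lemma polyIntegral_legendre_mul_of_ne {n m : ℕ} (hnm : n ≠ m) :
    polyIntegral (-1) 1 (legendre n * legendre m) = 0 := by
  have hn := polyIntegral_one_sub_sq_mul_derivative_legendre n m
  have hm := polyIntegral_one_sub_sq_mul_derivative_legendre m n
  rw [mul_right_comm, mul_comm (legendre m), hn] at hm
  have hfactor : (n : ℝ) * (n + 1) - m * (m + 1) = (n - m) * (n + m + 1) := by ring
  have hne : (n : ℝ) * (n + 1) - m * (m + 1) ≠ 0 := by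
    rw [hfactor]
    exact mul_ne_zero (sub_ne_zero.2 (Nat.cast_injective.ne hnm)) (by positivity)
  have hprod : ((n : ℝ) * (n + 1) - m * (m + 1)) *
      polyIntegral (-1) 1 (legendre n * legendre m) = 0 := by
    linear_combination hm
  exact (mul_eq_zero.1 hprod).resolve_left hne

lemma polyIntegral_legendre_mul_self (n : ℕ) :
    (2 * (n : ℝ) + 1) * polyIntegral (-1) 1 (legendre n * legendre n) = 2 := by
  induction n with
  | zero => norm_num [legendre, polyIntegral_apply]
  | succ n ih =>
    have hrec := legendre_recurrence n
    have hrec' := legendre_recurrence (n + 1)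
    have h₁ : C ((n : ℝ) + 1) * (legendre (n + 1) * legendre (n + 1)) =
        C (2 * (n : ℝ) + 1) * (X * legendre n * legendre (n + 1)) -
          C (n : ℝ) * (legendre (n - 1) * legendre (n + 1)) := by
      simp only [map_add, map_mul, map_natCast, map_ofNat, map_one]
      linear_combination legendre (n + 1) * hrec
    have h₂ : C ((n : ℝ) + 2) * (legendre (n + 2) * legendre n) =
        C (2 * (n : ℝ) + 3) * (X * legendre n * legendre (n + 1)) -
          C ((n : ℝ) + 1) * (legendre n * legendre n) := by
      simp only [map_add, map_mul, map_natCast, map_ofNat, map_one]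
      push_cast at hrec'
      linear_combination legendre n * hrec'
    replace h₁ := congrArg (polyIntegral (-1) 1) h₁
    replace h₂ := congrArg (polyIntegral (-1) 1) h₂
    simp only [map_sub, polyIntegral_C_mul,
      polyIntegral_legendre_mul_of_ne (by omega : n - 1 ≠ n + 1),
      polyIntegral_legendre_mul_of_ne (by omega : n + 2 ≠ n)] at h₁ h₂
    refine mul_left_cancel₀ (n.cast_add_one_ne_zero (R := ℝ)) ?_
    push_cast
    linear_combination
      (2 * (n : ℝ) + 3) * h₁ - (2 * (n : ℝ) + 1) * h₂ + ((n : ℝ) + 1) * ih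

lemma polyIntegral_legendre_mul (m n : ℕ) :
    polyIntegral (-1) 1 (legendre m * legendre n) =
      if m = n then 2 / (2 * (n : ℝ) + 1) else 0 := by
  split_ifs with h
  · subst h
    rw [eq_div_iff (by positivity), mul_comm]
    exact polyIntegral_legendre_mul_self m
  · exact polyIntegral_legendre_mul_of_ne h

lemma derivative_legendreTilde {k : ℕ} (hk : 1 ≤ k) :
    derivative (legendreTilde k) = C (-((2 * k + 1) / Real.sqrt (4 * k + 2))) * legendre k := by
  obtain ⟨n, rfl⟩ : ∃ n, k = n + 1 := ⟨k - 1, by omega⟩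
  rw [legendreTilde, derivative_C_mul, derivative_sub, Nat.add_sub_cancel, ← neg_sub,
    derivative_legendre_add_two_sub, mul_neg, ← mul_assoc, ← C_mul, ← neg_mul, ← C_neg]
  congr 2
  push_cast
  ring

theorem legendreTilde_deriv_orthonormal :
    ∀ i j : ℕ, 1 ≤ i → 1 ≤ j →
      (∫ x in (-1 : ℝ)..1,
          (legendreTilde i).derivative.eval x * (legendreTilde j).derivative.eval x)
        = if i = j then 1 else 0 := by
  intro i j hi hj
  simp_rw [← eval_mul]
  rw [← polyIntegral_apply, derivative_legendreTilde hi, derivative_legendreTilde hj,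
    mul_mul_mul_comm, ← C_mul, polyIntegral_C_mul, polyIntegral_legendre_mul]
  split_ifs with h
  · subst h
    rw [neg_mul_neg, ← sq, div_pow, Real.sq_sqrt (by positivity)]
    field_simp
    ring
  · exact mul_zero _
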